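/- Let n ≥ 4 and let p, q be integers with 2 ≤ p < q and 2q ≤ n. Let k_{2p}, k_{2q} be integers with 1 ≤ k_{2p} < p and 1 ≤ k_{2q} < q, and suppose q - k_{2q} ≤ k_{2p}. Then in S_n the following exchange law holds: v_{2q}^{k_{2q}} · v_{2p}^{k_{2p}} = v_{2p+2k_{2q}-2q}^{k_{2q}+k_{2p}-q} · v_{2k_{2q}}^{p-k_{2p}} · v_{2q}^{k_{2q}+k_{2p}-p}. -/

import Mathlib

/- We work in the symmetric group on `Fin n` (representing `{1, ..., n}` via `i ↦ i - 1`).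
The paper multiplies permutations left-to-right: `(π₁ · π₂)(i) = π₂(π₁(i))`,
while Mathlib's `*` on `Equiv.Perm` is function composition: `(π₁ * π₂)(i) = π₁(π₂(i))`.
Hence a paper product `A · B · C` is rendered below as `C * B * A`. -/

/-- `sP n i` is the transposition `sᵢ = (i, i+1)` (1-indexed), for `1 ≤ i ≤ n - 1`. -/
def sP (n i : ℕ) : Equiv.Perm (Fin n) :=
  if h : 1 ≤ i ∧ i < n then
    Equiv.swap ⟨i - 1, lt_of_le_of_lt (Nat.sub_le i 1) h.2⟩ ⟨i, h.2⟩
  else 1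

/-- `tP n m` is `t_m = s₁ · s₂ ⋯ s_{m-1}` (paper's left-to-right product, so here the
factor for larger index is multiplied on the left).  `tP n 0 = tP n 1 = 1`. -/
def tP (n m : ℕ) : Equiv.Perm (Fin n) :=
  (List.range (m - 1)).foldl (fun g j => sP n (j + 1) * g) 1

/-- `uP n r` is `u_{2r} = t_{2r-2} · s_{2r-1}` (paper order; here reversed). -/
def uP (n r : ℕ) : Equiv.Perm (Fin n) := sP n (2 * r - 1) * tP n (2 * r - 2)

/-- `vP n r` is `v_{2r} = t_{2r}²`. -/
def vP (n r : ℕ) : Equiv.Perm (Fin n) := (tP n (2 * r)) ^ 2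

/-!
On `{0, …, n-1}`, `t_m` cyclically rotates the initial segment `{0, …, m-1}` down by one and
fixes everything above it. Hence for `a ≤ r` the power `v_{2r}^a = t_{2r}^{2a}` rotates
`{0, …, 2r-1}` down by `2a`, so both sides of the exchange law are explicit piecewise-affine
maps on `ℕ`, and the identity reduces to a case analysis in linear arithmetic.
-/

def rotateBelow (m a x : ℕ) : ℕ :=
  if x < m then (if x < a then x + m - a else x - a) else x

lemma rotateBelow_rotateBelow_one {m a : ℕ} (ha : a < m) (x : ℕ) :
    rotateBelow m a (rotateBelow m 1 x) = rotateBelow m (a + 1) x := by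
  unfold rotateBelow
  split_ifs <;> omega

lemma sP_apply_val {n i : ℕ} (h1 : 1 ≤ i) (h2 : i < n) (x : Fin n) :
    (sP n i x).val = if x.val = i - 1 then i else if x.val = i then i - 1 else x.val := by
  rw [sP, dif_pos ⟨h1, h2⟩, Equiv.swap_apply_def]
  simp only [Fin.ext_iff]
  split_ifs <;> rfl

lemma tP_one (n : ℕ) : tP n 1 = 1 := rfl

lemma tP_succ (n : ℕ) {m : ℕ} (hm : 1 ≤ m) : tP n (m + 1) = sP n m * tP n m := by
  obtain ⟨k, rfl⟩ := Nat.exists_eq_add_of_le' hm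
  simp only [tP, Nat.add_sub_cancel, List.range_succ, List.foldl_append, List.foldl_cons,
    List.foldl_nil]

lemma tP_apply_val {n m : ℕ} (hm : m ≤ n) (x : Fin n) :
    (tP n m x).val = rotateBelow m 1 x.val := by
  induction m with
  | zero => simp [tP, rotateBelow]
  | succ m ih =>
    rcases Nat.eq_zero_or_pos m with rfl | hm1
    · simp only [zero_add, tP_one, Equiv.Perm.one_apply, rotateBelow]
      split_ifs <;> omega
    · rw [tP_succ n hm1, Equiv.Perm.mul_apply, sP_apply_val hm1 (by omega), ih (by omega)]
      unfold rotateBelow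
      split_ifs <;> omega

lemma tP_pow_apply_val {n m k : ℕ} (hm : m ≤ n) (hk : k ≤ m) (x : Fin n) :
    ((tP n m ^ k) x).val = rotateBelow m k x.val := by
  induction k generalizing x with
  | zero =>
    simp only [pow_zero, Equiv.Perm.one_apply, rotateBelow]
    split_ifs <;> omega
  | succ k ih =>
    rw [pow_succ, Equiv.Perm.mul_apply, ih (by omega), tP_apply_val hm,
      rotateBelow_rotateBelow_one (by omega)]

lemma vP_pow_apply_val {n r a : ℕ} (hr : 2 * r ≤ n) (ha : a ≤ r) (x : Fin n) :
    ((vP n r ^ a) x).val = rotateBelow (2 * r) (2 * a) x.val := by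
  rw [vP, ← pow_mul]
  exact tP_pow_apply_val hr (by omega) x

lemma rotateBelow_exchange {p q kp kq : ℕ} (hpq : p < q) (hkp : kp < p) (hkq : kq < q)
    (h : q - kq ≤ kp) (x : ℕ) :
    rotateBelow (2 * p) (2 * kp) (rotateBelow (2 * q) (2 * kq) x) =
      rotateBelow (2 * q) (2 * (kq + kp - p))
        (rotateBelow (2 * kq) (2 * (p - kp))
          (rotateBelow (2 * (p + kq - q)) (2 * (kq + kp - q)) x)) := by
  unfold rotateBelow
  grind

theorem v_exchange_case3_general (n p q kp kq : ℕ)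
    (hpq : p < q) (hq : 2 * q ≤ n)
    (hkp2 : kp < p) (hkq2 : kq < q)
    (h : q - kq ≤ kp) :
    vP n p ^ kp * vP n q ^ kq =
      vP n q ^ (kq + kp - p) * vP n kq ^ (p - kp) * vP n (p + kq - q) ^ (kq + kp - q) := by
  ext x
  simp only [Equiv.Perm.mul_apply]
  rw [vP_pow_apply_val (by omega) hkp2.le, vP_pow_apply_val hq hkq2.le,
    vP_pow_apply_val hq (by omega), vP_pow_apply_val (by omega) (by omega),
    vP_pow_apply_val (by omega) (by omega)]
  exact rotateBelow_exchange hpq hkp2 hkq2 h x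

/-- exchange law for the `v`'s, case `q - k_{2q} ≤ k_{2p}`:
`v_{2q}^{k_{2q}} · v_{2p}^{k_{2p}} = v_{2p+2k_{2q}-2q}^{k_{2q}+k_{2p}-q} · v_{2k_{2q}}^{p-k_{2p}} · v_{2q}^{k_{2q}+k_{2p}-p}`
(paper order; rendered here in composition order, i.e. reversed).  Here `vP n m = v_{2m}`. -/
theorem v_exchange_case3 (n p q kp kq : ℕ) (hn : 4 ≤ n)
    (hp : 2 ≤ p) (hpq : p < q) (hq : 2 * q ≤ n)
    (hkp1 : 1 ≤ kp) (hkp2 : kp < p) (hkq1 : 1 ≤ kq) (hkq2 : kq < q)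
    (h : q - kq ≤ kp) :
    vP n p ^ kp * vP n q ^ kq =
      vP n q ^ (kq + kp - p) * vP n kq ^ (p - kp) * vP n (p + kq - q) ^ (kq + kp - q) :=
  v_exchange_case3_general n p q kp kq hpq hq hkp2 hkq2 h
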